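/- arXiv:2001.11111 — 2 statements merged into one kernel-verified Lean document; each statement's English description precedes it below -/
import Mathlib

section
/- Let $\Psi: \mathcal{X} \times \mathbb{R}^d \to \mathbb{R}$ be twice continuously differentiable in $\theta$, and let $x_1, \dots, x_n, x_1'$ be points such that the Hessians satisfy $\lambda_{\min}(\partial^2_\theta \Psi(x_i, \theta)) \ge \delta > 0$ for all $\theta$ and all $i$, and also for $x_1'$. Let $\hat\theta$ minimize $\sum_{i=1}^n \Psi(x_i, \theta)$ and $\hat\theta^1$ minimize $\Psi(x_1', \theta) + \sum_{i=2}^n \Psi(x_i, \theta)$. Then $\|\hat\theta - \hat\theta^1\|_2 \le \frac{1}{n\delta} \|\partial_\theta \Psi(x_1, \hat\theta^1) - \partial_\theta \Psi(x_1', \hat\theta^1)\|_2$. -/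
/-!
Write `F` for the empirical risk. Along the segment from `a` to `b`, the derivative of
`t ↦ ⟪∇Ψ(x, a + t(b - a)), b - a⟫` is a Hessian quadratic form, hence at least `δ‖b - a‖²`; so each
`∇Ψ(xᵢ, ·)` is `δ`-strongly monotone and `∇F` is `nδ`-strongly monotone. At the two minimizers,
`∇F(θ̂) = 0`, while `∇F(θ̂¹) = ∇Ψ(x₁, θ̂¹) - ∇Ψ(x₁', θ̂¹)` because the replaced risk has zero gradient
at `θ̂¹`. Strong monotonicity and Cauchy–Schwarz give `nδ‖θ̂¹ - θ̂‖² ≤ ‖∇F(θ̂¹)‖ ‖θ̂¹ - θ̂‖`.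
-/

open scoped RealInnerProductSpace Gradient

section InnerProductSpace

variable {E : Type*} [NormedAddCommGroup E] [InnerProductSpace ℝ E]

theorem mul_norm_sq_le_inner_sub_of_le_inner_fderiv {g : E → E} {m : ℝ}
    (hg : Differentiable ℝ g) (h : ∀ θ v, m * ‖v‖ ^ 2 ≤ ⟪fderiv ℝ g θ v, v⟫) (a b : E) :
    m * ‖b - a‖ ^ 2 ≤ ⟪g b - g a, b - a⟫ := by
  set u := b - a
  set φ : ℝ → ℝ := fun t => ⟪g (a + t • u), u⟫
  have hφ : ∀ t, HasDerivAt φ ⟪fderiv ℝ g (a + t • u) u, u⟫ t := by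
    intro t
    have hline : HasDerivAt (fun t : ℝ => a + t • u) u t := by
      simpa using ((hasDerivAt_id t).smul_const u).const_add a
    simpa using ((hg _).hasFDerivAt.comp_hasDerivAt t hline).inner ℝ (hasDerivAt_const t u)
  have hmono := mul_sub_le_image_sub_of_le_deriv (fun t => (hφ t).differentiableAt)
    (fun t => (hφ t).deriv ▸ h _ u) zero_le_one
  simpa [φ, u, inner_sub_left] using hmono

theorem mul_norm_le_norm_of_mul_norm_sq_le_inner {u w : E} {m : ℝ}
    (h : m * ‖u‖ ^ 2 ≤ ⟪w, u⟫) : m * ‖u‖ ≤ ‖w‖ := by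
  rcases (norm_nonneg u).eq_or_lt with hu | hu
  · simp [← hu]
  · have : m * ‖u‖ * ‖u‖ ≤ ‖w‖ * ‖u‖ := by
      linarith [real_inner_le_norm w u]
    exact le_of_mul_le_mul_right this hu

variable [CompleteSpace E]

theorem HasGradientAt.add {f g : E → ℝ} {f' g' x : E} (hf : HasGradientAt f f' x)
    (hg : HasGradientAt g g' x) : HasGradientAt (fun y => f y + g y) (f' + g') x := by
  simp only [hasGradientAt_iff_hasFDerivAt, map_add] at *
  exact hf.fun_add hg

theorem HasGradientAt.sum {ι : Type*} {s : Finset ι} {f : ι → E → ℝ} {f' : ι → E} {x : E}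
    (h : ∀ i ∈ s, HasGradientAt (f i) (f' i) x) :
    HasGradientAt (fun y => ∑ i ∈ s, f i y) (∑ i ∈ s, f' i) x := by
  simp only [hasGradientAt_iff_hasFDerivAt, map_sum] at *
  exact HasFDerivAt.fun_sum h

theorem IsLocalMin.hasGradientAt_eq_zero {f : E → ℝ} {f' a : E} (h : IsLocalMin f a)
    (hf : HasGradientAt f f' a) : f' = 0 :=
  (InnerProductSpace.toDual ℝ E).map_eq_zero_iff.mp (h.hasFDerivAt_eq_zero hf)

theorem ContDiff.differentiable_gradient {f : E → ℝ} (hf : ContDiff ℝ 2 f) :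
    Differentiable ℝ (∇ f) :=
  (InnerProductSpace.toDual ℝ E).symm.differentiable.comp
    ((hf.fderiv_right (m := 1) (by norm_num)).differentiable one_ne_zero)

end InnerProductSpace

/-- Deterministic replace-one stability of M-estimators: if every summand has Hessian bounded
below by `δ > 0`, and `θ̂`, `θ̂¹` are the minimizers of the empirical risks before and after
replacing the first data point, then
`‖θ̂ - θ̂¹‖ ≤ (1/(nδ)) ‖∂_θΨ(x₁, θ̂¹) - ∂_θΨ(x₁', θ̂¹)‖`. -/
theorem m_estimator_replace_one_stability {𝓧 : Type*} {d n : ℕ} [NeZero n]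
    (δ : ℝ) (hδ : 0 < δ)
    (Ψ : 𝓧 → EuclideanSpace ℝ (Fin d) → ℝ)
    (x : Fin n → 𝓧) (x' : 𝓧)
    (hsmooth : ∀ y : 𝓧, y ∈ Set.range x ∪ {x'} → ContDiff ℝ 2 (Ψ y))
    (hhess : ∀ y : 𝓧, y ∈ Set.range x ∪ {x'} →
      ∀ θ v : EuclideanSpace ℝ (Fin d),
        δ * ‖v‖ ^ 2 ≤ ⟪fderiv ℝ (gradient (Ψ y)) θ v, v⟫)
    (θhat θhat1 : EuclideanSpace ℝ (Fin d))
    (hmin : IsMinOn (fun θ => ∑ i, Ψ (x i) θ) Set.univ θhat)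
    (hmin1 : IsMinOn
      (fun θ => Ψ x' θ + ∑ i ∈ Finset.univ.erase (0 : Fin n), Ψ (x i) θ)
      Set.univ θhat1) :
    ‖θhat - θhat1‖ ≤
      (1 / (n * δ)) * ‖gradient (Ψ (x 0)) θhat1 - gradient (Ψ x') θhat1‖ := by
  have hx : ∀ i, x i ∈ Set.range x ∪ {x'} := fun i => Or.inl ⟨i, rfl⟩
  have hx' : x' ∈ Set.range x ∪ {x'} := Or.inr rfl
  have hgrad : ∀ y ∈ Set.range x ∪ {x'}, ∀ θ, HasGradientAt (Ψ y) (∇ (Ψ y) θ) θ :=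
    fun y hy θ => ((hsmooth y hy).differentiable two_ne_zero θ).hasGradientAt
  have hzero : ∑ i, ∇ (Ψ (x i)) θhat = 0 :=
    (hmin.isLocalMin Filter.univ_mem).hasGradientAt_eq_zero
      (HasGradientAt.sum fun i _ => hgrad _ (hx i) θhat)
  have hzero1 : ∇ (Ψ x') θhat1 + ∑ i ∈ Finset.univ.erase 0, ∇ (Ψ (x i)) θhat1 = 0 :=
    (hmin1.isLocalMin Filter.univ_mem).hasGradientAt_eq_zero
      ((hgrad _ hx' θhat1).add (HasGradientAt.sum fun i _ => hgrad _ (hx i) θhat1))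
  have hgrad1 : ∑ i, ∇ (Ψ (x i)) θhat1 = ∇ (Ψ (x 0)) θhat1 - ∇ (Ψ x') θhat1 := by
    rw [← Finset.add_sum_erase _ _ (Finset.mem_univ 0), eq_neg_of_add_eq_zero_right hzero1,
      sub_eq_add_neg]
  have hmono : ∀ i, δ * ‖θhat1 - θhat‖ ^ 2 ≤
      ⟪∇ (Ψ (x i)) θhat1 - ∇ (Ψ (x i)) θhat, θhat1 - θhat⟫ := fun i =>
    mul_norm_sq_le_inner_sub_of_le_inner_fderiv
      (hsmooth _ (hx i)).differentiable_gradient (hhess _ (hx i)) θhat θhat1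
  have hstrong : (n * δ) * ‖θhat1 - θhat‖ ^ 2 ≤
      ⟪∇ (Ψ (x 0)) θhat1 - ∇ (Ψ x') θhat1, θhat1 - θhat⟫ := by
    have := Finset.sum_le_sum fun i (_ : i ∈ Finset.univ) => hmono i
    simpa [← sum_inner, Finset.sum_sub_distrib, hzero, hgrad1, mul_assoc] using this
  have hnδ : (0 : ℝ) < n * δ := mul_pos (Nat.cast_pos.mpr (NeZero.pos n)) hδ
  rw [norm_sub_rev, one_div, inv_mul_eq_div, le_div_iff₀' hnδ]
  exact mul_norm_le_norm_of_mul_norm_sq_le_inner hstrong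
end

section
/- Let $Z \sim \mathrm{Unif}[0,1]$, let $\mu = \frac{1}{2}$, and suppose $Z_1, \dots, Z_n$ are i.i.d. uniform on $[0,1]$ with $n \ge 2$. Let $c_1 = \arg\min_{i \le n} |Z_i - \tfrac12|$ be the index of the closest point to $\tfrac12$. Then, for the nearest-neighbour classifier $f_n(z) = \mathbb{I}(Z_{c(z)} \le \tfrac12)$ where $c(z) = \arg\min_i |Z_i - z|$ and the true label $Y = \mathbb{I}(Z \le \tfrac12)$, the misclassification event $\{Y \ne f_n(Z)\}$ occurs (almost surely, given the sample has points on both sides of $\tfrac12$) if and only if $Z$ lies in the interval between $\tfrac12$ and the midpoint $\tfrac12(Z_{c_1^*} + Z_{c_2^*})$, where $Z_{c_1^*}$ is the closest sample point to $\tfrac12$ and $Z_{c_2^*}$ is the closest sample point to $\tfrac12$ on the opposite side of $\tfrac12$ from $Z_{c_1^*}$. -/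
/-!
The nearest sample points to `1/2` on either side, `p ≤ 1/2 < q`, leave a gap `(p, q)` free of
sample points. Hence the nearest neighbour of `z` lies at or below `p` (label `1`) exactly when
`z` lies below the midpoint `(p + q)/2`, so the classifier behaves as the threshold rule at that
midpoint and errs exactly between `1/2` and the midpoint.
-/

open Set

theorem not_le_iff_le_iff_mem_uIoc {α : Type*} [LinearOrder α] {a b x : α} :
    ¬(x ≤ a ↔ x ≤ b) ↔ x ∈ uIoc a b := by
  rw [mem_uIoc]
  constructor
  · intro h
    rcases le_or_gt x a with hxa | hxa <;> rcases le_or_gt x b with hxb | hxb <;> tauto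
  · rintro (⟨hax, hxb⟩ | ⟨hbx, hxa⟩)
    · exact fun h => hax.not_ge (h.2 hxb)
    · exact fun h => hbx.not_ge (h.1 hxa)

section Nearest

variable {ι : Type*}

def IsUniqueNearest (Z : ι → ℝ) (x : ℝ) (c : ι) : Prop :=
  ∀ j, j ≠ c → |Z c - x| < |Z j - x|

theorem IsUniqueNearest.abs_sub_le {Z : ι → ℝ} {x : ℝ} {c : ι} (hc : IsUniqueNearest Z x c)
    (j : ι) : |Z c - x| ≤ |Z j - x| := by
  rcases eq_or_ne j c with rfl | hj
  · exact le_rfl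
  · exact (hc j hj).le

theorem le_or_le_of_nearest_on_each_side {p q t x : ℝ} (hp : p ≤ t) (hq : t ≤ q)
    (hleft : x ≤ t → |p - t| ≤ |x - t|) (hright : t < x → |q - t| ≤ |x - t|) :
    x ≤ p ∨ q ≤ x := by
  rcases le_or_gt x t with hx | hx
  · have h := hleft hx
    rw [abs_of_nonpos (by linarith), abs_of_nonpos (by linarith)] at h
    exact Or.inl (by linarith)
  · have h := hright hx
    rw [abs_of_nonneg (by linarith), abs_of_pos (by linarith)] at h
    exact Or.inr (by linarith)

variable {Z : ι → ℝ} {z : ℝ} {i k c : ι}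

theorem IsUniqueNearest.le_iff_le_midpoint (hc : IsUniqueNearest Z z c)
    (hgap : ∀ j, Z j ≤ Z i ∨ Z k ≤ Z j) (hik : Z i < Z k) :
    Z c ≤ Z i ↔ z ≤ (Z i + Z k) / 2 := by
  constructor
  · intro hci
    by_contra! hz
    have hck : k ≠ c := fun h => by rw [h] at hik; linarith
    have hnear := hc k hck
    have hk : |Z k - z| < z - Z i := abs_lt.2 ⟨by linarith, by linarith⟩
    rw [abs_of_neg (by linarith)] at hnear
    linarith
  · intro hz
    by_contra! hci
    have hkc : Z k ≤ Z c := (hgap c).resolve_left hci.not_ge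
    have hci' : i ≠ c := fun h => by rw [h] at hci; linarith
    have hnear := hc i hci'
    have hi : |Z i - z| ≤ Z k - z := abs_le.2 ⟨by linarith, by linarith⟩
    rw [abs_of_pos (by linarith)] at hnear
    linarith

theorem IsUniqueNearest.le_iff_le_midpoint_of_gap (hc : IsUniqueNearest Z z c) {t : ℝ}
    (hgap : ∀ j, Z j ≤ Z i ∨ Z k ≤ Z j) (hi : Z i ≤ t) (hk : t < Z k) :
    Z c ≤ t ↔ z ≤ (Z i + Z k) / 2 := by
  rw [← hc.le_iff_le_midpoint hgap (hi.trans_lt hk)]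
  rcases hgap c with h | h
  · exact iff_of_true (h.trans hi) h
  · exact iff_of_false (by linarith) (by linarith)

end Nearest

theorem nearest_neighbour_error_region_general {n : ℕ}
    (Z : Fin n → ℝ)
    (z : ℝ)
    (c : Fin n) (hc : ∀ j, j ≠ c → |Z c - z| < |Z j - z|)
    (c₁ : Fin n) (hc₁ : ∀ j, j ≠ c₁ → |Z c₁ - 1 / 2| < |Z j - 1 / 2|)
    (c₂ : Fin n)
    (hc₂left : Z c₁ ≤ 1 / 2 →
      1 / 2 < Z c₂ ∧ ∀ j, 1 / 2 < Z j → |Z c₂ - 1 / 2| ≤ |Z j - 1 / 2|)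
    (hc₂right : 1 / 2 < Z c₁ →
      Z c₂ ≤ 1 / 2 ∧ ∀ j, Z j ≤ 1 / 2 → |Z c₂ - 1 / 2| ≤ |Z j - 1 / 2|) :
    (¬ ((z ≤ 1 / 2) ↔ (Z c ≤ 1 / 2))) ↔
      z ∈ Set.uIoc (1 / 2 : ℝ) ((Z c₁ + Z c₂) / 2) := by
  have hc : IsUniqueNearest Z z c := hc
  have hc₁ : IsUniqueNearest Z (1 / 2) c₁ := hc₁
  rw [← not_le_iff_le_iff_mem_uIoc]
  suffices Z c ≤ 1 / 2 ↔ z ≤ (Z c₁ + Z c₂) / 2 by rw [this]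
  rcases le_or_gt (Z c₁) (1 / 2) with h₁ | h₁
  · obtain ⟨h₂, hc₂⟩ := hc₂left h₁
    refine hc.le_iff_le_midpoint_of_gap (fun j => ?_) h₁ h₂
    exact le_or_le_of_nearest_on_each_side h₁ h₂.le (fun _ => hc₁.abs_sub_le j) (hc₂ j)
  · obtain ⟨h₂, hc₂⟩ := hc₂right h₁
    rw [add_comm]
    refine hc.le_iff_le_midpoint_of_gap (fun j => ?_) h₂ h₁
    exact le_or_le_of_nearest_on_each_side h₂ h₁.le (hc₂ j) (fun _ => hc₁.abs_sub_le j)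

/-- Error region of the 1-nearest-neighbour classifier in one dimension with labels
`Y = 𝕀(Z ≤ 1/2)`: for sample points `Z₁, …, Zₙ` in `[0,1]` having points on both sides of
`1/2`, if `c` is the (unique, strictly) nearest sample point to the query `z`, `c₁` the nearest
sample point to `1/2`, and `c₂` the nearest sample point to `1/2` on the opposite side of `1/2`
from `Z_{c₁}`, then the query is misclassified iff `z` lies in the interval between `1/2` and
the midpoint `(Z_{c₁} + Z_{c₂})/2`. -/
theorem nearest_neighbour_error_region {n : ℕ}
    (Z : Fin n → ℝ) (hZ01 : ∀ i, Z i ∈ Set.Icc (0 : ℝ) 1)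
    (z : ℝ) (hz01 : z ∈ Set.Icc (0 : ℝ) 1)
    (hboth : (∃ i, Z i ≤ 1 / 2) ∧ (∃ i, 1 / 2 < Z i))
    (c : Fin n) (hc : ∀ j, j ≠ c → |Z c - z| < |Z j - z|)
    (c₁ : Fin n) (hc₁ : ∀ j, j ≠ c₁ → |Z c₁ - 1 / 2| < |Z j - 1 / 2|)
    (c₂ : Fin n)
    (hc₂left : Z c₁ ≤ 1 / 2 →
      1 / 2 < Z c₂ ∧ ∀ j, 1 / 2 < Z j → |Z c₂ - 1 / 2| ≤ |Z j - 1 / 2|)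
    (hc₂right : 1 / 2 < Z c₁ →
      Z c₂ ≤ 1 / 2 ∧ ∀ j, Z j ≤ 1 / 2 → |Z c₂ - 1 / 2| ≤ |Z j - 1 / 2|) :
    (¬ ((z ≤ 1 / 2) ↔ (Z c ≤ 1 / 2))) ↔
      z ∈ Set.uIoc (1 / 2 : ℝ) ((Z c₁ + Z c₂) / 2) :=
  nearest_neighbour_error_region_general Z z c hc c₁ hc₁ c₂ hc₂left hc₂right
end
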